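/- arXiv:math/0505334 — 4 statements merged into one kernel-verified Lean document; each statement's English description precedes it below -/
import Mathlib

section
/- (Asimov–Roth gluing lemma) Let d ≥ 1 and let G_1 and G_2 be finite simple graphs that are each generically d-rigid. If G_1 and G_2 have at least d vertices in common, then the union graph G_1 ∪ G_2 (union of vertex sets and of edge sets) is generically d-rigid. -/
namespace Paper2CM

open Matrix Module

section Helpers

theorem sum_dotProduct' {ι m : Type*} [Fintype ι] [Fintype m] (f : ι → m → ℝ) (z : m → ℝ) :
    (∑ i, f i) ⬝ᵥ z = ∑ i, f i ⬝ᵥ z := by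
  simp only [dotProduct, Finset.sum_mul, Finset.sum_apply]
  exact Finset.sum_comm

/-- If `z` is orthogonal to each member of a linearly independent `d`-family in `ℝ^d`,
then `z = 0`. -/
theorem eq_zero_of_dot_li {d : ℕ} {q : Fin d → (Fin d → ℝ)} (hq : LinearIndependent ℝ q)
    {z : Fin d → ℝ} (h : ∀ i, z ⬝ᵥ q i = 0) : z = 0 := by
  rcases Nat.eq_zero_or_pos d with hd | hd
  · subst hd; funext i; exact absurd i.2 (by omega)
  have : Nonempty (Fin d) := ⟨⟨0, hd⟩⟩
  have hspan : z ∈ Submodule.span ℝ (Set.range q) := by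
    have hcard : Fintype.card (Fin d) = Module.finrank ℝ (Fin d → ℝ) := by simp
    let B := basisOfLinearIndependentOfCardEqFinrank hq hcard
    have hB : ⇑B = q := coe_basisOfLinearIndependentOfCardEqFinrank hq hcard
    have hsp := B.span_eq
    rw [hB] at hsp
    rw [hsp]; trivial
  rw [Finsupp.mem_span_range_iff_exists_finsupp] at hspan
  obtain ⟨c, hc⟩ := hspan
  have hzz : z ⬝ᵥ z = 0 := by
    have h2 : (∑ i, c i • q i) ⬝ᵥ z = z ⬝ᵥ z := by
      rw [show (∑ i, c i • q i) = c.sum fun i a => a • q i from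
        (Finsupp.sum_fintype c (fun i a => a • q i) (fun i => zero_smul ℝ (q i))).symm, hc]
    rw [← h2, sum_dotProduct']
    refine Finset.sum_eq_zero fun i _ => ?_
    rw [smul_dotProduct, dotProduct_comm, h i, smul_zero]
  exact dotProduct_self_eq_zero.mp hzz

/-- If every vector orthogonal to all of `s` is orthogonal to all of `t`,
then `span t ≤ span s` (in a finite-dimensional real coordinate space). -/
theorem span_le_span_of_dot {ι : Type*} [Fintype ι] (s t : Set (ι → ℝ))
    (h : ∀ v : ι → ℝ, (∀ a ∈ s, a ⬝ᵥ v = 0) → ∀ b ∈ t, b ⬝ᵥ v = 0) :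
    Submodule.span ℝ t ≤ Submodule.span ℝ s := by
  classical
  let e : (ι → ℝ) ≃ₗ[ℝ] EuclideanSpace ℝ ι := (WithLp.linearEquiv 2 ℝ (ι → ℝ)).symm
  have hinner : ∀ a v : ι → ℝ, (inner ℝ (e a) (e v) : ℝ) = a ⬝ᵥ v := by
    intro a v
    simp [e, PiLp.inner_apply, RCLike.inner_apply, dotProduct, mul_comm]
  set S : Submodule ℝ (EuclideanSpace ℝ ι) := (Submodule.span ℝ s).map (e : (ι → ℝ) →ₗ[ℝ] EuclideanSpace ℝ ι) with hS
  set T : Submodule ℝ (EuclideanSpace ℝ ι) := (Submodule.span ℝ t).map (e : (ι → ℝ) →ₗ[ℝ] EuclideanSpace ℝ ι) with hT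
  have hST : T ≤ S := by
    have horth : Sᗮ ≤ Tᗮ := by
      intro v hv
      rw [Submodule.mem_orthogonal] at hv ⊢
      have hs0 : ∀ a ∈ s, a ⬝ᵥ (e.symm v) = 0 := by
        intro a ha
        rw [← hinner a (e.symm v)]
        simp only [LinearEquiv.apply_symm_apply]
        exact hv (e a) ⟨a, Submodule.subset_span ha, rfl⟩
      intro u hu
      rw [hT, Submodule.map_span] at hu
      have hker : Submodule.span ℝ (e '' t) ≤ LinearMap.ker ((innerSL ℝ).flip v : EuclideanSpace ℝ ι →ₛₗ[starRingEnd ℝ] ℝ) := by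
        rw [Submodule.span_le]
        rintro _ ⟨b, hb, rfl⟩
        simp only [SetLike.mem_coe, LinearMap.mem_ker, ContinuousLinearMap.coe_coe, ContinuousLinearMap.flip_apply,
          innerSL_apply_apply]
        have hb0 := h (e.symm v) hs0 b hb
        rw [← hinner b (e.symm v), e.apply_symm_apply] at hb0
        first
        | exact hb0
        | (rw [real_inner_comm]; exact hb0)
      have h3 := hker hu
      rw [LinearMap.mem_ker] at h3
      simp only [ContinuousLinearMap.coe_coe, ContinuousLinearMap.flip_apply, innerSL_apply_apply] at h3
      first
      | exact h3
      | (rw [real_inner_comm]; exact h3)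
    calc T = Tᗮᗮ := (Submodule.orthogonal_orthogonal T).symm
    _ ≤ Sᗮᗮ := Submodule.orthogonal_le horth
    _ = S := Submodule.orthogonal_orthogonal S
  intro z hz
  have : e z ∈ S := hST (Submodule.mem_map_of_mem hz)
  obtain ⟨w, hw, hwz⟩ := this
  exact (e.injective hwz) ▸ hw

end Helpers

section Minors

variable {m n : Type*} [Fintype m] [Fintype n] [DecidableEq m] [DecidableEq n]

theorem rank_submatrix_le' {r : ℕ} (A : Matrix m n ℝ) (ρ : Fin r → m) (ι : Fin r → n) :
    (A.submatrix ρ ι).rank ≤ A.rank := by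
  rw [rank_eq_finrank_span_cols, rank_eq_finrank_span_cols]
  let L : (m → ℝ) →ₗ[ℝ] (Fin r → ℝ) := LinearMap.funLeft ℝ ℝ ρ
  have hsub : Set.range (A.submatrix ρ ι)ᵀ ⊆ L '' (Set.range Aᵀ) := by
    rintro _ ⟨j, rfl⟩
    exact ⟨Aᵀ (ι j), ⟨ι j, rfl⟩, rfl⟩
  calc finrank ℝ (Submodule.span ℝ (Set.range (A.submatrix ρ ι)ᵀ))
      ≤ finrank ℝ (Submodule.span ℝ (L '' (Set.range Aᵀ))) :=
        Submodule.finrank_mono (Submodule.span_mono hsub)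
    _ = finrank ℝ ((Submodule.span ℝ (Set.range Aᵀ)).map L) := by rw [Submodule.map_span]
    _ ≤ finrank ℝ (Submodule.span ℝ (Set.range Aᵀ)) := Submodule.finrank_map_le L _

theorem le_rank_of_det_ne_zero {r : ℕ} (A : Matrix m n ℝ) (ρ : Fin r → m) (ι : Fin r → n)
    (h : (A.submatrix ρ ι).det ≠ 0) : r ≤ A.rank := by
  have hunit : IsUnit (A.submatrix ρ ι) := by
    rw [Matrix.isUnit_iff_isUnit_det]
    exact isUnit_iff_ne_zero.mpr h
  calc r = Fintype.card (Fin r) := (Fintype.card_fin r).symm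
  _ = (A.submatrix ρ ι).rank := (Matrix.rank_of_isUnit _ hunit).symm
  _ ≤ A.rank := rank_submatrix_le' A ρ ι

/-- One can pick `A.rank` many linearly independent columns of `A`. -/
theorem exists_li_cols (A : Matrix m n ℝ) :
    ∃ ι : Fin A.rank → n, LinearIndependent ℝ (fun j => Aᵀ (ι j)) := by
  classical
  obtain ⟨s, hsub, hspan, hli⟩ := exists_linearIndependent ℝ (Set.range Aᵀ)
  have hfin : s.Finite := Set.Finite.subset (Set.finite_range Aᵀ) hsub
  have : Fintype s := hfin.fintype
  have hcard : s.toFinset.card = A.rank := by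
    rw [rank_eq_finrank_span_cols, show A.col = Aᵀ from rfl, ← hspan, finrank_span_set_eq_card hli]
  have hcard2 : Fintype.card s = A.rank := by rw [Set.toFinset_card] at hcard; exact hcard
  let eqv : Fin A.rank ≃ s := (Fintype.equivFinOfCardEq hcard2).symm
  have hchoose : ∀ x : s, ∃ j : n, Aᵀ j = (x : m → ℝ) := fun x => hsub x.2
  choose jdx hjdx using hchoose
  refine ⟨fun i => jdx (eqv i), ?_⟩
  have heq : (fun i => Aᵀ (jdx (eqv i))) = (fun x : s => (x : m → ℝ)) ∘ eqv := by
    funext i; simp [hjdx]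
  rw [heq]
  exact hli.comp eqv eqv.injective

/-- A matrix has a nonzero minor of size equal to its rank. -/
theorem exists_minor (A : Matrix m n ℝ) :
    ∃ (ρ : Fin A.rank → m) (ι : Fin A.rank → n), (A.submatrix ρ ι).det ≠ 0 := by
  obtain ⟨ι, hι⟩ := exists_li_cols A
  let B : Matrix m (Fin A.rank) ℝ := A.submatrix id ι
  have hrB : B.rank = A.rank := by
    rw [rank_eq_finrank_span_cols]
    have hr : Set.range Bᵀ = Set.range (fun j => Aᵀ (ι j)) := by congr
    rw [show B.col = Bᵀ from rfl, hr, finrank_span_eq_card hι, Fintype.card_fin]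
  have hrBT : Bᵀ.rank = A.rank := by rw [Matrix.rank_transpose]; exact hrB
  obtain ⟨ι', hι'⟩ := exists_li_cols Bᵀ
  let ρ : Fin A.rank → m := fun k => ι' (Fin.cast hrBT.symm k)
  refine ⟨ρ, ι, ?_⟩
  have hrows : LinearIndependent ℝ (fun k : Fin A.rank => (A.submatrix ρ ι) k) := by
    have heq : (fun k : Fin A.rank => (A.submatrix ρ ι) k)
        = (fun j => Bᵀᵀ (ι' j)) ∘ (Fin.cast hrBT.symm) := by
      funext k; rfl
    rw [heq]
    exact hι'.comp _ (fun a b hab => by simpa [Fin.ext_iff] using hab)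
  have hunit : IsUnit (A.submatrix ρ ι) := Matrix.linearIndependent_rows_iff_isUnit.mp hrows
  rw [Matrix.isUnit_iff_isUnit_det] at hunit
  exact hunit.ne_zero

end Minors

section FlexExtend

/-- **Key geometric lemma** (infinitesimal version of the gluing argument):
an infinitesimal flex of both complete graphs on `W₁` and on `W₂`, where the two share
`d` points in sufficiently general position, is a flex of the complete graph on
`W₁ ∪ W₂`. -/
theorem flex_extend {V : Type*} {d : ℕ} (g v : V → (Fin d → ℝ)) (x : Fin d → V)
    (W₁ W₂ : Set V)
    (hx : ∀ i, x i ∈ W₁ ∩ W₂)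
    (ha : LinearIndependent ℝ (fun i => g (x i)))
    (hb : ∀ u, u ∈ W₁ ∪ W₂ → u ∉ Set.range x → LinearIndependent ℝ (fun i => g u - g (x i)))
    (h1 : ∀ u ∈ W₁, ∀ w ∈ W₁, (v u - v w) ⬝ᵥ (g u - g w) = 0)
    (h2 : ∀ u ∈ W₂, ∀ w ∈ W₂, (v u - v w) ⬝ᵥ (g u - g w) = 0) :
    ∀ u ∈ W₁ ∪ W₂, ∀ w ∈ W₁ ∪ W₂, (v u - v w) ⬝ᵥ (g u - g w) = 0 := by
  rcases Nat.eq_zero_or_pos d with hd | hd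
  · intro u _ w _
    subst hd
    simp [dotProduct]
  have : Nonempty (Fin d) := ⟨⟨0, hd⟩⟩
  have hcard : Fintype.card (Fin d) = Module.finrank ℝ (Fin d → ℝ) := by simp
  set B := basisOfLinearIndependentOfCardEqFinrank ha hcard with hBdef
  have hB : ∀ i, B i = g (x i) :=
    fun i => congrFun (coe_basisOfLinearIndependentOfCardEqFinrank ha hcard) i
  obtain ⟨b, hball⟩ : ∃ b : Fin d → ℝ, ∀ i, g (x i) ⬝ᵥ b = v (x i) ⬝ᵥ g (x i) := by
    let L : (Fin d → ℝ) →ₗ[ℝ] (Fin d → ℝ) :=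
      { toFun := fun z => fun i => g (x i) ⬝ᵥ z
        map_add' := by intro y z; funext i; simp [dotProduct_add]
        map_smul' := by intro c z; funext i; simp [dotProduct_smul] }
    have hinj : Function.Injective L := by
      rw [← LinearMap.ker_eq_bot, LinearMap.ker_eq_bot']
      intro z hz
      have hz' : ∀ i, z ⬝ᵥ g (x i) = 0 := by
        intro i
        have := congrFun hz i
        simpa [L, dotProduct_comm] using this
      exact eq_zero_of_dot_li ha hz'
    have hsurj : Function.Surjective L := (LinearMap.injective_iff_surjective).mp hinj
    obtain ⟨b, hbeq⟩ := hsurj (fun i => v (x i) ⬝ᵥ g (x i))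
    exact ⟨b, fun i => congrFun hbeq i⟩
  set A : (Fin d → ℝ) →ₗ[ℝ] (Fin d → ℝ) := B.constr ℝ (fun i => v (x i) - b) with hAdef
  have hAgx : ∀ i, A (g (x i)) = v (x i) - b := by
    intro i
    rw [← hB i]
    exact B.constr_basis ℝ _ i
  have hskew : ∀ y z, A y ⬝ᵥ z + A z ⬝ᵥ y = 0 := by
    let Φ : (Fin d → ℝ) →ₗ[ℝ] (Fin d → ℝ) →ₗ[ℝ] ℝ :=
      LinearMap.mk₂ ℝ (fun y z => A y ⬝ᵥ z + A z ⬝ᵥ y)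
        (by intro y₁ y₂ z; simp [map_add, add_dotProduct, dotProduct_add]; ring)
        (by intro c y z; simp [_root_.map_smul, smul_dotProduct, dotProduct_smul,
              smul_eq_mul]; ring)
        (by intro y z₁ z₂; simp [map_add, add_dotProduct, dotProduct_add]; ring)
        (by intro c y z; simp [_root_.map_smul, smul_dotProduct, dotProduct_smul,
              smul_eq_mul]; ring)
    have hΦ : Φ = 0 := by
      apply B.ext
      intro i
      apply B.ext
      intro j
      have hpair := h1 (x i) (hx i).1 (x j) (hx j).1
      have hbi := hball i
      have hbj := hball j
      have c1 : b ⬝ᵥ g (x j) = g (x j) ⬝ᵥ b := dotProduct_comm _ _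
      have c2 : b ⬝ᵥ g (x i) = g (x i) ⬝ᵥ b := dotProduct_comm _ _
      simp only [Φ, LinearMap.mk₂_apply, LinearMap.zero_apply, hB, hAgx]
      simp only [sub_dotProduct, dotProduct_sub] at hpair ⊢
      linarith [hpair, hbi, hbj, c1, c2]
    intro y z
    have h0 : Φ y z = 0 := by rw [hΦ]; rfl
    simpa [Φ] using h0
  have hskew' : ∀ z, A z ⬝ᵥ z = 0 := by
    intro z
    have := hskew z z
    linarith
  set v' : V → (Fin d → ℝ) := fun u => v u - A (g u) - b with hv'def
  have hv'x : ∀ i, v' (x i) = 0 := by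
    intro i
    simp [v', hAgx i]
  have hv'dot : ∀ u w, (v u - v w) ⬝ᵥ (g u - g w) = 0 →
      (v' u - v' w) ⬝ᵥ (g u - g w) = 0 := by
    intro u w h0
    simp only [v']
    rw [show (v u - A (g u) - b - (v w - A (g w) - b)) = (v u - v w) - A (g u - g w) by
      rw [map_sub]; abel]
    rw [sub_dotProduct, h0, hskew' (g u - g w)]
    ring
  have hv'zero : ∀ u ∈ W₁ ∪ W₂, v' u = 0 := by
    intro u hu
    by_cases hux : u ∈ Set.range x
    · obtain ⟨i, rfl⟩ := hux; exact hv'x i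
    have hdots : ∀ i, v' u ⬝ᵥ (g u - g (x i)) = 0 := by
      intro i
      have hpair : (v u - v (x i)) ⬝ᵥ (g u - g (x i)) = 0 := by
        rcases hu with hu1 | hu2
        · exact h1 u hu1 (x i) (hx i).1
        · exact h2 u hu2 (x i) (hx i).2
      have := hv'dot u (x i) hpair
      rwa [hv'x i, sub_zero] at this
    exact eq_zero_of_dot_li (hb u hu hux) hdots
  intro u hu w hw
  have h0 : v u - v w = A (g u - g w) := by
    have e1 : v u = v' u + A (g u) + b := by simp [v']; abel
    have e2 : v w = v' w + A (g w) + b := by simp [v']; abel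
    rw [e1, e2, hv'zero u hu, hv'zero w hw, map_sub]
    abel
  rw [h0]
  exact hskew' _

end FlexExtend

variable {V : Type*} [Fintype V] [DecidableEq V]

open Classical in
/-- The rigidity matrix of the graph with edge set `E` (a set of 2-element subsets)
with respect to `f : V → ℝ^d`.  Rows are indexed by `V × Fin d`; columns are indexed
by ordered pairs `(u, w)`: the column of an edge `{u, w}` carries `f u − f w` in the
rows of `u`, `f w − f u` in the rows of `w`, and zeros elsewhere (duplicating each
edge column up to sign does not change the rank). -/
noncomputable def rigidityMatrix (d : ℕ) (E : Set (Finset V)) (f : V → Fin d → ℝ) :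
    Matrix (V × Fin d) (V × V) ℝ :=
  fun p e =>
    if e.1 ≠ e.2 ∧ ({e.1, e.2} : Finset V) ∈ E then
      if p.1 = e.1 then f e.1 p.2 - f e.2 p.2
      else if p.1 = e.2 then f e.2 p.2 - f e.1 p.2
      else 0
    else 0

/-- The maximal (generic) rank of the rigidity matrix over all `d`-embeddings. -/
noncomputable def maxRigRank (d : ℕ) (E : Set (Finset V)) : ℕ :=
  ⨆ f : V → Fin d → ℝ, (rigidityMatrix d E f).rank

/-- A graph with vertex set `W` and edge set `E` is generically `d`-rigid if the
generic rank of its rigidity matrix equals that of the complete graph on `W`. -/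
def GenericallyRigid (d : ℕ) (W : Set V) (E : Set (Finset V)) : Prop :=
  maxRigRank d E = maxRigRank d {e : Finset V | e.card = 2 ∧ ∀ x ∈ e, x ∈ W}

section RigLemmas

variable (d : ℕ) (E E' : Set (Finset V)) (f : V → Fin d → ℝ)

theorem col_zero (u w : V) (h : ¬(u ≠ w ∧ ({u, w} : Finset V) ∈ E)) :
    (rigidityMatrix d E f)ᵀ (u, w) = 0 := by
  funext p
  simp only [transpose_apply, rigidityMatrix]
  rw [if_neg h]
  rfl

theorem col_eq_of_mem (u w : V) (h : u ≠ w) (hE : ({u, w} : Finset V) ∈ E)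
    (hE' : ({u, w} : Finset V) ∈ E') :
    (rigidityMatrix d E f)ᵀ (u, w) = (rigidityMatrix d E' f)ᵀ (u, w) := by
  funext p
  simp only [transpose_apply, rigidityMatrix]
  rw [if_pos (⟨h, hE⟩ : u ≠ w ∧ ({u, w} : Finset V) ∈ E),
    if_pos (⟨h, hE'⟩ : u ≠ w ∧ ({u, w} : Finset V) ∈ E')]

theorem col_dot (u w : V) (h : u ≠ w) (hE : ({u, w} : Finset V) ∈ E) (v : V × Fin d → ℝ) :
    (rigidityMatrix d E f)ᵀ (u, w) ⬝ᵥ v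
      = ((fun k => v (u, k)) - fun k => v (w, k)) ⬝ᵥ (f u - f w) := by
  classical
  simp only [dotProduct, transpose_apply, rigidityMatrix]
  simp only [if_pos (⟨h, hE⟩ : u ≠ w ∧ ({u, w} : Finset V) ∈ E)]
  rw [Fintype.sum_prod_type]
  have hfun : ∀ a : V,
      (∑ k, (if a = u then f u k - f w k else if a = w then f w k - f u k else 0) * v (a, k))
        = (if a = u then ∑ k, (f u k - f w k) * v (u, k) else 0)
          + (if a = w then ∑ k, (f w k - f u k) * v (w, k) else 0) := by
    intro a
    by_cases hau : a = u
    · subst hau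
      simp [if_neg h]
    · by_cases haw : a = w
      · subst haw
        simp [hau]
      · simp [hau, haw]
  rw [Finset.sum_congr rfl (fun a _ => hfun a), Finset.sum_add_distrib,
    Finset.sum_ite_eq' Finset.univ u, Finset.sum_ite_eq' Finset.univ w]
  simp only [Finset.mem_univ, if_true]
  rw [← Finset.sum_add_distrib]
  simp only [dotProduct, Pi.sub_apply]
  exact Finset.sum_congr rfl fun k _ => by ring

/-- The column space of the rigidity matrix. -/
noncomputable def CS : Submodule ℝ (V × Fin d → ℝ) :=
  Submodule.span ℝ (Set.range (rigidityMatrix d E f)ᵀ)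

theorem rank_eq_CS : (rigidityMatrix d E f).rank = finrank ℝ (CS d E f) :=
  rank_eq_finrank_span_cols _

theorem CS_mono (h : ∀ u w : V, u ≠ w → ({u, w} : Finset V) ∈ E → ({u, w} : Finset V) ∈ E') :
    CS d E f ≤ CS d E' f := by
  rw [CS, Submodule.span_le]
  rintro _ ⟨⟨u, w⟩, rfl⟩
  by_cases hc : u ≠ w ∧ ({u, w} : Finset V) ∈ E
  · rw [col_eq_of_mem d E E' f u w hc.1 hc.2 (h u w hc.1 hc.2)]
    exact Submodule.subset_span ⟨(u, w), rfl⟩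
  · rw [col_zero d E f u w hc]
    exact Submodule.zero_mem _

theorem CS_union : CS d (E ∪ E') f = CS d E f ⊔ CS d E' f := by
  apply le_antisymm
  · rw [CS, Submodule.span_le]
    rintro _ ⟨⟨u, w⟩, rfl⟩
    by_cases hc : u ≠ w ∧ ({u, w} : Finset V) ∈ E ∪ E'
    · rcases hc.2 with hc1 | hc2
      · rw [col_eq_of_mem d (E ∪ E') E f u w hc.1 hc.2 hc1]
        exact Submodule.mem_sup_left (Submodule.subset_span ⟨(u, w), rfl⟩)
      · rw [col_eq_of_mem d (E ∪ E') E' f u w hc.1 hc.2 hc2]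
        exact Submodule.mem_sup_right (Submodule.subset_span ⟨(u, w), rfl⟩)
    · rw [col_zero d (E ∪ E') f u w hc]
      exact Submodule.zero_mem _
  · apply sup_le
    · exact CS_mono d E (E ∪ E') f fun u w _ hE => Set.mem_union_left _ hE
    · exact CS_mono d E' (E ∪ E') f fun u w _ hE => Set.mem_union_right _ hE

theorem rank_le_rank (h : ∀ u w : V, u ≠ w → ({u, w} : Finset V) ∈ E → ({u, w} : Finset V) ∈ E') :
    (rigidityMatrix d E f).rank ≤ (rigidityMatrix d E' f).rank := by
  rw [rank_eq_CS, rank_eq_CS]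
  exact Submodule.finrank_mono (CS_mono d E E' f h)

theorem bddAbove_rank : BddAbove (Set.range fun f : V → Fin d → ℝ => (rigidityMatrix d E f).rank) := by
  refine ⟨Fintype.card (V × V), ?_⟩
  rintro _ ⟨f, rfl⟩
  exact Matrix.rank_le_card_width _

theorem rank_le_maxRigRank : (rigidityMatrix d E f).rank ≤ maxRigRank d E :=
  le_ciSup (bddAbove_rank d E) f

theorem exists_rank_eq_maxRigRank : ∃ f : V → Fin d → ℝ,
    (rigidityMatrix d E f).rank = maxRigRank d E := by
  have h := Nat.sSup_mem (s := Set.range fun f : V → Fin d → ℝ => (rigidityMatrix d E f).rank)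
    ⟨(rigidityMatrix d E (fun _ _ => 0)).rank, ⟨_, rfl⟩⟩ (bddAbove_rank d E)
  obtain ⟨f, hf⟩ := h
  exact ⟨f, hf⟩

end RigLemmas

section PolyMatrix

open MvPolynomial

open Classical in
/-- The generic rigidity matrix, with polynomial entries. -/
noncomputable def rigP (d : ℕ) (E : Set (Finset V)) :
    Matrix (V × Fin d) (V × V) (MvPolynomial (V × Fin d) ℝ) :=
  fun p e =>
    if e.1 ≠ e.2 ∧ ({e.1, e.2} : Finset V) ∈ E then
      if p.1 = e.1 then X (e.1, p.2) - X (e.2, p.2)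
      else if p.1 = e.2 then X (e.2, p.2) - X (e.1, p.2)
      else 0
    else 0

theorem rigP_eval (d : ℕ) (E : Set (Finset V)) (y : V × Fin d → ℝ) :
    (rigP d E).map (MvPolynomial.eval y) = rigidityMatrix d E (fun u k => y (u, k)) := by
  funext p e
  simp only [Matrix.map_apply, rigP, rigidityMatrix]
  split_ifs <;> simp

theorem le_rank_of_eval (d : ℕ) (E : Set (Finset V)) (r : ℕ)
    (ρ : Fin r → V × Fin d) (ι : Fin r → V × V) (y : V × Fin d → ℝ)
    (h : MvPolynomial.eval y (((rigP d E).submatrix ρ ι).det) ≠ 0) :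
    r ≤ (rigidityMatrix d E (fun u k => y (u, k))).rank := by
  classical
  rw [RingHom.map_det, RingHom.mapMatrix_apply, ← Matrix.submatrix_map, rigP_eval] at h
  exact le_rank_of_det_ne_zero _ ρ ι h

theorem eval_minor (d : ℕ) (E : Set (Finset V)) (r : ℕ)
    (ρ : Fin r → V × Fin d) (ι : Fin r → V × V) (y : V × Fin d → ℝ) :
    MvPolynomial.eval y (((rigP d E).submatrix ρ ι).det)
      = ((rigidityMatrix d E (fun u k => y (u, k))).submatrix ρ ι).det := by
  classical
  rw [RingHom.map_det, RingHom.mapMatrix_apply, ← Matrix.submatrix_map, rigP_eval]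

end PolyMatrix

/-- **Asimov–Roth gluing lemma.** Let `d ≥ 1` and let `G₁ = (W₁, E₁)`
and `G₂ = (W₂, E₂)` be finite simple graphs, each generically `d`-rigid.  If they
have at least `d` vertices in common, then `G₁ ∪ G₂` is generically `d`-rigid. -/
theorem asimov_roth_gluing
    (d : ℕ) (hd : 1 ≤ d)
    (W₁ W₂ : Set V) (E₁ E₂ : Set (Finset V))
    (hE₁ : ∀ e ∈ E₁, e.card = 2 ∧ ∀ x ∈ e, x ∈ W₁)
    (hE₂ : ∀ e ∈ E₂, e.card = 2 ∧ ∀ x ∈ e, x ∈ W₂)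
    (h₁ : GenericallyRigid d W₁ E₁)
    (h₂ : GenericallyRigid d W₂ E₂)
    (hcommon : d ≤ (W₁ ∩ W₂).ncard) :
    GenericallyRigid d (W₁ ∪ W₂) (E₁ ∪ E₂) := by
  classical
  set K1 : Set (Finset V) := {e : Finset V | e.card = 2 ∧ ∀ x ∈ e, x ∈ W₁} with hK1
  set K2 : Set (Finset V) := {e : Finset V | e.card = 2 ∧ ∀ x ∈ e, x ∈ W₂} with hK2
  set K12 : Set (Finset V) := {e : Finset V | e.card = 2 ∧ ∀ x ∈ e, x ∈ W₁ ∪ W₂} with hK12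
  have memK : ∀ (W : Set V) (u w : V), u ≠ w → u ∈ W → w ∈ W →
      ({u, w} : Finset V) ∈ {e : Finset V | e.card = 2 ∧ ∀ x ∈ e, x ∈ W} := by
    intro W u w hne hu hw
    refine ⟨Finset.card_pair hne, ?_⟩
    intro a ha
    rcases Finset.mem_insert.mp ha with rfl | ha
    · exact hu
    · rw [Finset.mem_singleton] at ha; subst ha; exact hw
  -- choose `d` common vertices
  obtain ⟨t, htsub, htcard⟩ := Set.exists_subset_card_eq hcommon
  have : Fintype t := (Set.toFinite t).fintype
  have htc : Fintype.card t = d := by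
    rw [Set.ncard_eq_toFinset_card', Set.toFinset_card] at htcard
    exact htcard
  let eqv : Fin d ≃ t := (Fintype.equivFinOfCardEq htc).symm
  let x : Fin d → V := fun i => (eqv i : V)
  have hxinj : Function.Injective x := fun i j hij => eqv.injective (Subtype.ext hij)
  have hx : ∀ i, x i ∈ W₁ ∩ W₂ := fun i => htsub (eqv i).2
  -- maximizers and nonvanishing minors
  obtain ⟨y₁, hy₁⟩ := exists_rank_eq_maxRigRank d E₁
  obtain ⟨ρ₁, ι₁, hm₁⟩ := exists_minor (rigidityMatrix d E₁ y₁)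
  obtain ⟨y₂, hy₂⟩ := exists_rank_eq_maxRigRank d E₂
  obtain ⟨ρ₂, ι₂, hm₂⟩ := exists_minor (rigidityMatrix d E₂ y₂)
  obtain ⟨y₃, hy₃⟩ := exists_rank_eq_maxRigRank d K12
  obtain ⟨ρ₃, ι₃, hm₃⟩ := exists_minor (rigidityMatrix d K12 y₃)
  set p₁ := ((rigP d E₁).submatrix ρ₁ ι₁).det with hp₁def
  set p₂ := ((rigP d E₂).submatrix ρ₂ ι₂).det with hp₂def
  set p₃ := ((rigP d K12).submatrix ρ₃ ι₃).det with hp₃def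
  set pa : MvPolynomial (V × Fin d) ℝ :=
    (Matrix.of fun i j : Fin d => (MvPolynomial.X ((x j), i) : MvPolynomial (V × Fin d) ℝ)).det
    with hpadef
  set pb : V → MvPolynomial (V × Fin d) ℝ := fun u =>
    (Matrix.of fun i j : Fin d =>
      (MvPolynomial.X (u, i) - MvPolynomial.X ((x j), i) : MvPolynomial (V × Fin d) ℝ)).det
    with hpbdef
  set s0 : Finset V := Finset.univ.filter (fun u => u ∉ Set.range x) with hs0def
  -- the minor polynomials are nonzero
  have hp₁ne : p₁ ≠ 0 := by
    intro h0
    apply hm₁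
    rw [hp₁def] at h0
    have he := eval_minor d E₁ _ ρ₁ ι₁ (fun q => y₁ q.1 q.2)
    rw [h0, map_zero] at he
    exact he.symm
  have hp₂ne : p₂ ≠ 0 := by
    intro h0
    apply hm₂
    rw [hp₂def] at h0
    have he := eval_minor d E₂ _ ρ₂ ι₂ (fun q => y₂ q.1 q.2)
    rw [h0, map_zero] at he
    exact he.symm
  have hp₃ne : p₃ ≠ 0 := by
    intro h0
    apply hm₃
    rw [hp₃def] at h0
    have he := eval_minor d K12 _ ρ₃ ι₃ (fun q => y₃ q.1 q.2)
    rw [h0, map_zero] at he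
    exact he.symm
  have hpane : pa ≠ 0 := by
    intro h0
    have he : MvPolynomial.eval (fun q : V × Fin d => if q.1 = x q.2 then (1:ℝ) else 0) pa
        = (1 : Matrix (Fin d) (Fin d) ℝ).det := by
      rw [hpadef, RingHom.map_det, RingHom.mapMatrix_apply]
      congr 1
      funext i j
      simp only [Matrix.map_apply, Matrix.of_apply, MvPolynomial.eval_X, Matrix.one_apply]
      by_cases hij : i = j
      · subst hij; simp
      · rw [if_neg (fun h => hij (hxinj h).symm), if_neg hij]
    rw [h0, map_zero, Matrix.det_one] at he
    exact zero_ne_one he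
  have hpbne : ∀ u, u ∉ Set.range x → pb u ≠ 0 := by
    intro u hux h0
    have he : MvPolynomial.eval
        (fun q : V × Fin d => if q.1 = u then (0:ℝ) else if q.1 = x q.2 then 1 else 0) (pb u)
        = (-(1 : Matrix (Fin d) (Fin d) ℝ)).det := by
      rw [hpbdef, RingHom.map_det, RingHom.mapMatrix_apply]
      congr 1
      funext i j
      simp only [Matrix.map_apply, Matrix.of_apply, map_sub, MvPolynomial.eval_X,
        Matrix.neg_apply, Matrix.one_apply]
      have hxju : x j ≠ u := fun h => hux ⟨j, h⟩
      rw [if_pos trivial, if_neg hxju]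
      by_cases hij : i = j
      · subst hij; simp
      · rw [if_neg (fun h => hij (hxinj h).symm), if_neg hij]; ring
    rw [h0, map_zero] at he
    rw [Matrix.det_neg, Matrix.det_one, Fintype.card_fin, mul_one] at he
    have hne : ((-1 : ℝ) ^ d) ≠ 0 := pow_ne_zero _ (by norm_num)
    exact hne he.symm
  -- a simultaneous generic point
  have hPne : p₁ * p₂ * p₃ * pa * ∏ u ∈ s0, pb u ≠ 0 := by
    refine mul_ne_zero (mul_ne_zero (mul_ne_zero (mul_ne_zero hp₁ne hp₂ne) hp₃ne) hpane) ?_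
    rw [Finset.prod_ne_zero_iff]
    intro u hu
    exact hpbne u (by simpa [hs0def] using hu)
  obtain ⟨y, hy⟩ : ∃ y : V × Fin d → ℝ,
      MvPolynomial.eval y (p₁ * p₂ * p₃ * pa * ∏ u ∈ s0, pb u) ≠ 0 := by
    by_contra hc
    push_neg at hc
    exact hPne (MvPolynomial.funext fun z => by rw [hc z, map_zero])
  simp only [_root_.map_mul, map_prod] at hy
  obtain ⟨h1234, hprod⟩ := mul_ne_zero_iff.mp hy
  obtain ⟨h123, hpa⟩ := mul_ne_zero_iff.mp h1234
  obtain ⟨h12, hp3⟩ := mul_ne_zero_iff.mp h123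
  obtain ⟨hp1, hp2⟩ := mul_ne_zero_iff.mp h12
  have hpb : ∀ u, u ∉ Set.range x → MvPolynomial.eval y (pb u) ≠ 0 := by
    intro u hux
    rw [Finset.prod_ne_zero_iff] at hprod
    exact hprod u (by
      simp only [hs0def, Finset.mem_filter, Finset.mem_univ, true_and]
      exact hux)
  set f : V → Fin d → ℝ := fun u k => y (u, k) with hfdef
  -- the ranks at the generic point
  have hr₁ : (rigidityMatrix d E₁ f).rank = maxRigRank d E₁ :=
    le_antisymm (rank_le_maxRigRank d E₁ f)
      (by rw [← hy₁]; exact le_rank_of_eval d E₁ _ ρ₁ ι₁ y hp1)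
  have hr₂ : (rigidityMatrix d E₂ f).rank = maxRigRank d E₂ :=
    le_antisymm (rank_le_maxRigRank d E₂ f)
      (by rw [← hy₂]; exact le_rank_of_eval d E₂ _ ρ₂ ι₂ y hp2)
  have hr₃ : (rigidityMatrix d K12 f).rank = maxRigRank d K12 :=
    le_antisymm (rank_le_maxRigRank d K12 f)
      (by rw [← hy₃]; exact le_rank_of_eval d K12 _ ρ₃ ι₃ y hp3)
  -- genericity of the configuration
  have hLI : LinearIndependent ℝ (fun i => f (x i)) := by
    have hdet : (Matrix.of fun i j : Fin d => f (x j) i).det ≠ 0 := by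
      intro h0
      apply hpa
      rw [hpadef, RingHom.map_det, RingHom.mapMatrix_apply]
      rw [show ((Matrix.of fun i j : Fin d =>
          (MvPolynomial.X ((x j), i) : MvPolynomial (V × Fin d) ℝ)).map
            (MvPolynomial.eval y)) = Matrix.of fun i j : Fin d => f (x j) i from by
        funext i j
        simp [Matrix.map_apply, hfdef]]
      exact h0
    have hunit : IsUnit (Matrix.of fun i j : Fin d => f (x j) i) := by
      rw [Matrix.isUnit_iff_isUnit_det]
      exact isUnit_iff_ne_zero.mpr hdet
    exact Matrix.linearIndependent_cols_iff_isUnit.mpr hunit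
  have hLIb : ∀ u, u ∈ W₁ ∪ W₂ → u ∉ Set.range x →
      LinearIndependent ℝ (fun i => f u - f (x i)) := by
    intro u _ hux
    have hdet : (Matrix.of fun i j : Fin d => f u i - f (x j) i).det ≠ 0 := by
      intro h0
      apply hpb u hux
      rw [hpbdef, RingHom.map_det, RingHom.mapMatrix_apply]
      rw [show ((Matrix.of fun i j : Fin d =>
          (MvPolynomial.X (u, i) - MvPolynomial.X ((x j), i)
            : MvPolynomial (V × Fin d) ℝ)).map (MvPolynomial.eval y))
          = Matrix.of fun i j : Fin d => f u i - f (x j) i from by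
        funext i j
        simp [Matrix.map_apply, hfdef]]
      exact h0
    have hunit : IsUnit (Matrix.of fun i j : Fin d => f u i - f (x j) i) := by
      rw [Matrix.isUnit_iff_isUnit_det]
      exact isUnit_iff_ne_zero.mpr hdet
    have := Matrix.linearIndependent_cols_iff_isUnit.mpr hunit
    exact this
  -- column space identifications
  have hCS₁ : CS d E₁ f = CS d K1 f := by
    refine Submodule.eq_of_le_of_finrank_le
      (CS_mono d E₁ K1 f fun u w _ he => hE₁ _ he) ?_
    rw [← rank_eq_CS, ← rank_eq_CS]
    calc (rigidityMatrix d K1 f).rank ≤ maxRigRank d K1 := rank_le_maxRigRank d K1 f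
      _ = maxRigRank d E₁ := h₁.symm
      _ = (rigidityMatrix d E₁ f).rank := hr₁.symm
  have hCS₂ : CS d E₂ f = CS d K2 f := by
    refine Submodule.eq_of_le_of_finrank_le
      (CS_mono d E₂ K2 f fun u w _ he => hE₂ _ he) ?_
    rw [← rank_eq_CS, ← rank_eq_CS]
    calc (rigidityMatrix d K2 f).rank ≤ maxRigRank d K2 := rank_le_maxRigRank d K2 f
      _ = maxRigRank d E₂ := h₂.symm
      _ = (rigidityMatrix d E₂ f).rank := hr₂.symm
  -- the key orthogonality argument
  have hKey : CS d K12 f ≤ CS d K1 f ⊔ CS d K2 f := by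
    have hsup : CS d K1 f ⊔ CS d K2 f
        = Submodule.span ℝ (Set.range (rigidityMatrix d K1 f)ᵀ
            ∪ Set.range (rigidityMatrix d K2 f)ᵀ) := (Submodule.span_union _ _).symm
    rw [hsup, CS]
    apply span_le_span_of_dot
    intro v hv
    set vv : V → Fin d → ℝ := fun a k => v (a, k) with hvvdef
    have hW1 : ∀ u ∈ W₁, ∀ w ∈ W₁, (vv u - vv w) ⬝ᵥ (f u - f w) = 0 := by
      intro u hu w hw
      by_cases huw : u = w
      · subst huw; simp
      · have hmem := memK W₁ u w huw hu hw
        have h0 := hv ((rigidityMatrix d K1 f)ᵀ (u, w))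
          (Set.mem_union_left _ ⟨(u, w), rfl⟩)
        rw [col_dot d K1 f u w huw hmem v] at h0
        exact h0
    have hW2 : ∀ u ∈ W₂, ∀ w ∈ W₂, (vv u - vv w) ⬝ᵥ (f u - f w) = 0 := by
      intro u hu w hw
      by_cases huw : u = w
      · subst huw; simp
      · have hmem := memK W₂ u w huw hu hw
        have h0 := hv ((rigidityMatrix d K2 f)ᵀ (u, w))
          (Set.mem_union_right _ ⟨(u, w), rfl⟩)
        rw [col_dot d K2 f u w huw hmem v] at h0
        exact h0
    have hall := flex_extend f vv x W₁ W₂ hx hLI hLIb hW1 hW2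
    rintro _ ⟨⟨u, w⟩, rfl⟩
    by_cases hc : u ≠ w ∧ ({u, w} : Finset V) ∈ K12
    · have hu : u ∈ W₁ ∪ W₂ := hc.2.2 u (Finset.mem_insert_self u {w})
      have hw : w ∈ W₁ ∪ W₂ := hc.2.2 w
        (Finset.mem_insert_of_mem (Finset.mem_singleton_self w))
      rw [col_dot d K12 f u w hc.1 hc.2 v]
      exact hall u hu w hw
    · rw [col_zero d K12 f u w hc, zero_dotProduct]
  -- identification of the column space of the union
  have hCSU : CS d (E₁ ∪ E₂) f = CS d K12 f := by
    apply le_antisymm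
    · refine CS_mono d (E₁ ∪ E₂) K12 f fun u w _ he => ?_
      rcases he with he | he
      · obtain ⟨hcard2, hsub⟩ := hE₁ _ he
        exact ⟨hcard2, fun a ha => Set.mem_union_left _ (hsub a ha)⟩
      · obtain ⟨hcard2, hsub⟩ := hE₂ _ he
        exact ⟨hcard2, fun a ha => Set.mem_union_right _ (hsub a ha)⟩
    · calc CS d K12 f ≤ CS d K1 f ⊔ CS d K2 f := hKey
        _ = CS d E₁ f ⊔ CS d E₂ f := by rw [hCS₁, hCS₂]
        _ = CS d (E₁ ∪ E₂) f := (CS_union d E₁ E₂ f).symm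
  -- conclusion
  show maxRigRank d (E₁ ∪ E₂) = maxRigRank d K12
  apply le_antisymm
  · apply ciSup_le
    intro f'
    calc (rigidityMatrix d (E₁ ∪ E₂) f').rank
        ≤ (rigidityMatrix d K12 f').rank := by
          refine rank_le_rank d (E₁ ∪ E₂) K12 f' fun u w _ he => ?_
          rcases he with he | he
          · obtain ⟨hcard2, hsub⟩ := hE₁ _ he
            exact ⟨hcard2, fun a ha => Set.mem_union_left _ (hsub a ha)⟩
          · obtain ⟨hcard2, hsub⟩ := hE₂ _ he
            exact ⟨hcard2, fun a ha => Set.mem_union_right _ (hsub a ha)⟩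
      _ ≤ maxRigRank d K12 := rank_le_maxRigRank d K12 f'
  · calc maxRigRank d K12 = (rigidityMatrix d K12 f).rank := hr₃.symm
      _ = finrank ℝ (CS d K12 f) := rank_eq_CS d K12 f
      _ = finrank ℝ (CS d (E₁ ∪ E₂) f) := by rw [hCSU]
      _ = (rigidityMatrix d (E₁ ∪ E₂) f).rank := (rank_eq_CS d (E₁ ∪ E₂) f).symm
      _ ≤ maxRigRank d (E₁ ∪ E₂) := rank_le_maxRigRank d (E₁ ∪ E₂) f

end Paper2CM
end

section
/- Let C_1,…,C_m be finite simple graphs such that for every 1 < i ≤ m, the intersection C_i ∩ (C_1 ∪ ⋯ ∪ C_{i−1}) contains an edge. Then for every i_0 ∈ {1,…,m} there is a permutation σ of {1,…,m} with σ^{−1}(1) = i_0 such that for every 1 < i ≤ m, the intersection C_{σ^{−1}(i)} ∩ (C_{σ^{−1}(1)} ∪ ⋯ ∪ C_{σ^{−1}(i−1)}) contains an edge. -/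
namespace Paper2CM

/-- Let `C₁, …, C_m` be finite simple graphs (with vertex sets
`W i` and edge sets `E i`) such that for every `i > 1` the intersection
`C_i ∩ (C₁ ∪ ⋯ ∪ C_{i−1})` contains an edge.  Then for every `i₀` there is a
permutation `σ` of the indices with `σ⁻¹(1) = i₀` such that the reordered sequence
has the same property.  (Indices are `0`-based: position `1` is `(0 : Fin m)`.) -/
theorem reorder_edge_glued_decomposition
    {V : Type*} [Fintype V] [DecidableEq V] (m : ℕ)
    (W : Fin m → Set V) (E : Fin m → Set (Finset V))
    (hE : ∀ i, ∀ e ∈ E i, e.card = 2 ∧ ∀ x ∈ e, x ∈ W i)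
    (h : ∀ i : Fin m, 0 < (i : ℕ) →
      (E i ∩ ⋃ j ∈ {j : Fin m | j < i}, E j).Nonempty)
    (i₀ : Fin m) :
    ∃ σ : Equiv.Perm (Fin m), σ.symm ⟨0, i₀.pos⟩ = i₀ ∧
      ∀ i : Fin m, 0 < (i : ℕ) →
        (E (σ.symm i) ∩ ⋃ j ∈ {j : Fin m | j < i}, E (σ.symm j)).Nonempty := by
  classical
  have hm : 0 < m := i₀.pos
  set z : Fin m := ⟨0, hm⟩ with hzdef
  set R : Fin m → Fin m → Prop := fun i j => (E i ∩ E j).Nonempty with hRdef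
  have Rsymm : ∀ i j, R i j → R j i := by
    rintro i j ⟨e, he1, he2⟩; exact ⟨e, he2, he1⟩
  -- every index is reachable from z
  have reach : ∀ i : Fin m, Relation.ReflTransGen R i z := by
    have key : ∀ n : ℕ, ∀ i : Fin m, (i : ℕ) = n → Relation.ReflTransGen R i z := by
      intro n
      induction n using Nat.strong_induction_on with
      | _ n ih =>
        intro i hi
        rcases Nat.eq_zero_or_pos n with h0 | hpos
        · have : i = z := Fin.ext (by simp [hzdef, hi, h0])
          rw [this]
        · obtain ⟨e, he1, he2⟩ := h i (by omega)
          simp only [Set.mem_iUnion, Set.mem_setOf_eq] at he2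
          obtain ⟨j, hj, hje⟩ := he2
          exact Relation.ReflTransGen.head ⟨e, he1, hje⟩
            (ih (j : ℕ) (by omega) j rfl)
    intro i; exact key (i : ℕ) i rfl
  -- crossing lemma
  have cross : ∀ S : Set (Fin m), S.Nonempty → Sᶜ.Nonempty →
      ∃ x, x ∉ S ∧ ∃ y ∈ S, R x y := by
    rintro S ⟨a, ha⟩ ⟨b, hb⟩
    by_contra hc
    push_neg at hc
    have closedS : ∀ p q : Fin m, Relation.ReflTransGen R p q → p ∈ S → q ∈ S := by
      intro p q hpq
      induction hpq with
      | refl => exact id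
      | tail hab hbc ih =>
        intro hp
        by_contra hcn
        exact hc _ hcn _ (ih hp) (Rsymm _ _ hbc)
    have closedSc : ∀ p q : Fin m, Relation.ReflTransGen R p q → p ∉ S → q ∉ S := by
      intro p q hpq
      induction hpq with
      | refl => exact id
      | tail hab hbc ih =>
        intro hp hcn
        exact hc _ (ih hp) _ hcn hbc
    exact closedSc b z (reach b) hb (closedS a z (reach a) ha)
  -- list property
  let Q : List (Fin m) → Prop := fun l =>
    ∀ k : ℕ, ∀ hk : k < l.length, 0 < k →
      ∃ j : ℕ, ∃ hj : j < k, R (l.get ⟨k, hk⟩) (l.get ⟨j, hj.trans hk⟩)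
  -- grow a list
  have grow : ∀ n : ℕ, n + 1 ≤ m → ∃ l : List (Fin m), l.Nodup ∧ l.length = n + 1 ∧
      (∀ hl : 0 < l.length, l.get ⟨0, hl⟩ = i₀) ∧ Q l := by
    intro n
    induction n with
    | zero =>
      intro _
      refine ⟨[i₀], by simp, by simp, by simp, ?_⟩
      intro k hk h0
      simp at hk; omega
    | succ n ih =>
      intro hn
      obtain ⟨l, hnd, hlen, hhead, hQ⟩ := ih (by omega)
      set S : Set (Fin m) := {i | i ∈ l} with hSdef
      have hSne : S.Nonempty := ⟨i₀, by
        have := hhead (by omega)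
        simpa [hSdef, ← this] using List.get_mem l ⟨0, by omega⟩⟩
      have hScne : Sᶜ.Nonempty := by
        by_contra hcon
        rw [Set.not_nonempty_iff_eq_empty, Set.compl_empty_iff] at hcon
        have hsub : (Finset.univ : Finset (Fin m)) ⊆ l.toFinset := by
          intro x _
          have : x ∈ S := hcon ▸ Set.mem_univ x
          simpa [hSdef] using this
        have hcard := Finset.card_le_card hsub
        have h1 : l.toFinset.card = l.length := List.toFinset_card_of_nodup hnd
        simp [h1, hlen] at hcard
        omega
      obtain ⟨x, hx, y, hy, hxy⟩ := cross S hSne hScne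
      have hxl : x ∉ l := by simpa [hSdef] using hx
      have hyl : y ∈ l := by simpa [hSdef] using hy
      obtain ⟨jy, hjy⟩ := List.mem_iff_get.mp hyl
      refine ⟨l ++ [x], ?_, by simp [hlen], ?_, ?_⟩
      · simp [List.nodup_append, hnd, hxl]
        rintro a ha rfl; exact hxl ha
      · intro hl
        have h0 : (0 : ℕ) < l.length := by omega
        rw [List.get_eq_getElem, List.getElem_append_left (i := 0) (by omega)]
        exact hhead h0
      · intro k hk h0
        simp only [List.length_append, List.length_singleton] at hk
        rcases Nat.lt_or_ge k l.length with hkl | hkl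
        · obtain ⟨j, hj, hR⟩ := hQ k hkl h0
          refine ⟨j, hj, ?_⟩
          rw [List.get_eq_getElem, List.get_eq_getElem, List.getElem_append_left (i := k) (by omega), List.getElem_append_left (i := j) (by omega)]
          exact hR
        · have hkeq : k = l.length := by omega
          refine ⟨(jy : ℕ), by omega, ?_⟩
          have hgk : (l ++ [x]).get ⟨k, by simp; omega⟩ = x := by
            subst hkeq
            simp [List.getElem_append_right]
          have hgj : (l ++ [x]).get ⟨(jy : ℕ), by simp⟩ = y := by
            rw [List.get_eq_getElem, List.getElem_append_left (i := (jy : ℕ)) (by omega)]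
            simpa using hjy
          simp only [hgk, hgj]
          exact hxy
  obtain ⟨l, hnd, hlen, hhead, hQ⟩ := grow (m - 1) (by omega)
  have hlenm : l.length = m := by omega
  let f : Fin m → Fin m := fun i => l.get (Fin.cast hlenm.symm i)
  have hfinj : Function.Injective f := by
    intro a b hab
    have := (List.nodup_iff_injective_get.mp hnd) hab
    simpa [Fin.ext_iff] using Fin.ext_iff.mp this
  have hfbij : Function.Bijective f := (Finite.injective_iff_bijective).mp hfinj
  refine ⟨(Equiv.ofBijective f hfbij).symm, ?_, ?_⟩
  · rw [Equiv.symm_symm]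
    have h0 : (0 : ℕ) < l.length := by omega
    simpa [f] using hhead h0
  · rw [Equiv.symm_symm]
    intro i hi
    obtain ⟨j, hj, hR⟩ := hQ (i : ℕ) (by omega) hi
    obtain ⟨e, he1, he2⟩ := hR
    refine ⟨e, ?_, ?_⟩
    · simpa [f, Equiv.ofBijective] using he1
    · simp only [Set.mem_iUnion, Set.mem_setOf_eq]
      refine ⟨⟨j, by omega⟩, ?_, ?_⟩
      · exact hj
      · simpa [f, Equiv.ofBijective] using he2

end Paper2CM
end

section
/- Let k be a field and d ≥ 1. Let s be a minimal (d−1)-cycle over k and let c be a d-chain with ∂c = s that is minimal in the sense that no subchain c′ of c with c′ ≠ c satisfies ∂c′ = s. Let v be a vertex not contained in any set of supp(c) (hence v lies in no set of supp(s)). Then the d-chain s̃ = c − v*s is a minimal d-cycle over k. -/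
namespace Paper2CM

variable {V : Type*} [Fintype V] [LinearOrder V]

/-- `sign(t,T) = (−1)^{|{s ∈ T : s < t}|}`. -/
def signOf (t : V) (T : Finset V) : ℤ := (-1) ^ (T.filter (fun s => s < t)).card

/-- The simplicial boundary operator on formal chains with coefficients in an
abelian group `A`: `∂c(S) = Σ_{t ∉ S} sign(t, S ∪ {t}) • c(S ∪ {t})`. -/
def bdry {A : Type*} [AddCommGroup A] (c : Finset V → A) : Finset V → A :=
  fun S => ∑ t ∈ Sᶜ, signOf t (insert t S) • c (insert t S)

/-- A chain of degree `n - 1`, i.e. supported on sets of cardinality `n`. -/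
def IsSimpChain {A : Type*} [AddCommGroup A] (n : ℕ) (c : Finset V → A) : Prop :=
  ∀ T, c T ≠ 0 → T.card = n

/-- `c'` is a subchain of `c`: each coefficient of `c'` agrees with that of `c` or is `0`. -/
def Subchain {A : Type*} [AddCommGroup A] (c' c : Finset V → A) : Prop :=
  ∀ T, c' T = c T ∨ c' T = 0

/-- A minimal cycle supported on sets of cardinality `n` (so of dimension `n - 1`):
a nonzero cycle whose only subchains that are cycles are `0` and itself. -/
def IsMinimalCycle {A : Type*} [AddCommGroup A] (n : ℕ) (c : Finset V → A) : Prop :=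
  c ≠ 0 ∧ IsSimpChain n c ∧ bdry c = 0 ∧
    ∀ c', Subchain c' c → bdry c' = 0 → c' = 0 ∨ c' = c

/-- The simplicial complex spanned by the support of a chain. -/
def spannedComplex {A : Type*} [AddCommGroup A] (c : Finset V → A) : Set (Finset V) :=
  {S | ∃ T, c T ≠ 0 ∧ S ⊆ T}

/-- The cone `v*c` over a chain `c` by a vertex `v` not contained in any set of
`supp(c)`: `(v*c)(T) = sign(v, T∖{v}) • c(T∖{v})` if `v ∈ T`, and `0` otherwise. -/
def coneChain {A : Type*} [AddCommGroup A] (v : V) (c : Finset V → A) : Finset V → A :=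
  fun T => if v ∈ T then signOf v (T.erase v) • c (T.erase v) else 0

end Paper2CM

/-!
Every chain splits as `c = del_v c + v * lk_v c` (the part avoiding `v` plus a cone over the
link of `v`), and the cone formula `∂(v * x) = x - v * ∂x` turns this into
`∂(lk_v c) = -lk_v (∂c)`. For a subcycle `c'` of `c - v * s`, the chain `-lk_v c'` is therefore
a cycle and a subchain of `s`, so it is `0` or `s`; accordingly `∂(del_v c')` is `0` or `s`,
and since `del_v c'` is a subchain of `c`, the minimality of `c` forces `c' = 0` or
`c' = c - v * s`.
-/

namespace Paper2CM

section Subchains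

variable {V A : Type*} [AddCommGroup A]

lemma IsSimpChain.sub {n : ℕ} {a b : Finset V → A} (ha : IsSimpChain n a)
    (hb : IsSimpChain n b) : IsSimpChain n (a - b) := by
  intro T hT
  by_cases haT : a T = 0
  · exact hb T fun hbT => hT (by simp [haT, hbT])
  · exact ha T haT

lemma Subchain.neg {a c : Finset V → A} (h : Subchain a c) : Subchain (-a) (-c) := by
  intro T
  rcases h T with h | h <;> simp [h]

lemma Subchain.complement {a c : Finset V → A} (h : Subchain a c) : Subchain (c - a) c := by
  intro T
  rcases h T with h | h <;> simp [h]

end Subchains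

variable {V : Type*} [LinearOrder V]

lemma signOf_smul_signOf_smul {A : Type*} [AddCommGroup A] (t : V) (T : Finset V) (x : A) :
    signOf t T • signOf t T • x = x := by
  rw [smul_smul, signOf, ← mul_pow, neg_one_mul, neg_neg, one_pow, one_smul]

lemma signOf_insert_self (t : V) (T : Finset V) : signOf t (insert t T) = signOf t T := by
  simp [signOf, Finset.filter_insert]

lemma signOf_insert {u : V} {R : Finset V} (t : V) (hu : u ∉ R) :
    signOf t (insert u R) = (if u < t then -1 else 1) * signOf t R := by
  unfold signOf
  rw [Finset.filter_insert]
  split_ifs with hut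
  · rw [Finset.card_insert_of_notMem (by simp [hu]), pow_succ, mul_comm]
  · rw [one_mul]

lemma signOf_insert_mul_signOf_insert {t v : V} {R : Finset V} (htv : t ≠ v) (ht : t ∉ R)
    (hv : v ∉ R) :
    signOf t (insert v R) * signOf v (insert t R) = -(signOf t R * signOf v R) := by
  rw [signOf_insert t hv, signOf_insert v ht]
  rcases htv.lt_or_gt with h | h <;> simp only [h, h.not_gt, if_true, if_false] <;> ring

section Chains

variable {A : Type*} [AddCommGroup A]

lemma coneChain_zero (v : V) : coneChain v (0 : Finset V → A) = 0 := by
  funext T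
  simp [coneChain]

lemma coneChain_neg (v : V) (x : Finset V → A) : coneChain v (-x) = -coneChain v x := by
  funext T
  by_cases hvT : v ∈ T <;> simp [coneChain, hvT]

lemma IsSimpChain.coneChain {n : ℕ} (v : V) {x : Finset V → A} (hx : IsSimpChain n x) :
    IsSimpChain (n + 1) (coneChain v x) := by
  intro T hT
  have hvT : v ∈ T := by by_contra h; simp [Paper2CM.coneChain, h] at hT
  have hxT : x (T.erase v) ≠ 0 := fun h => hT (by simp [Paper2CM.coneChain, hvT, h])
  rw [← Finset.insert_erase hvT, Finset.card_insert_of_notMem (Finset.notMem_erase v T),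
    hx _ hxT]

def AvoidsVertex (v : V) (c : Finset V → A) : Prop :=
  ∀ T, v ∈ T → c T = 0

def deletionChain (v : V) (c : Finset V → A) : Finset V → A :=
  fun T => if v ∈ T then 0 else c T

/-- The link of `v` in `c`, signed so that `c = deletionChain v c + v * linkChain v c`. -/
def linkChain (v : V) (c : Finset V → A) : Finset V → A :=
  fun S => if v ∈ S then 0 else signOf v S • c (insert v S)

lemma deletionChain_avoidsVertex (v : V) (c : Finset V → A) :
    AvoidsVertex v (deletionChain v c) := fun _ hvT => if_pos hvT

lemma linkChain_avoidsVertex (v : V) (c : Finset V → A) : AvoidsVertex v (linkChain v c) :=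
  fun _ hvS => if_pos hvS

lemma deletionChain_add_coneChain_linkChain (v : V) (c : Finset V → A) :
    deletionChain v c + coneChain v (linkChain v c) = c := by
  funext T
  by_cases hvT : v ∈ T
  · simp [deletionChain, linkChain, coneChain, hvT, signOf_smul_signOf_smul]
  · simp [deletionChain, coneChain, hvT]

lemma deletionChain_sub (v : V) (a b : Finset V → A) :
    deletionChain v (a - b) = deletionChain v a - deletionChain v b := by
  funext T
  by_cases hvT : v ∈ T <;> simp [deletionChain, hvT]

lemma deletionChain_of_avoidsVertex {v : V} {c : Finset V → A} (hc : AvoidsVertex v c) :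
    deletionChain v c = c := by
  funext T
  by_cases hvT : v ∈ T <;> simp [deletionChain, hvT, hc T]

lemma deletionChain_coneChain (v : V) (x : Finset V → A) :
    deletionChain v (coneChain v x) = 0 := by
  funext T
  by_cases hvT : v ∈ T <;> simp [deletionChain, coneChain, hvT]

lemma linkChain_add (v : V) (a b : Finset V → A) :
    linkChain v (a + b) = linkChain v a + linkChain v b := by
  funext S
  by_cases hvS : v ∈ S <;> simp [linkChain, hvS, smul_add]

lemma linkChain_sub (v : V) (a b : Finset V → A) :
    linkChain v (a - b) = linkChain v a - linkChain v b := by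
  funext S
  by_cases hvS : v ∈ S <;> simp [linkChain, hvS, smul_sub]

lemma linkChain_zero (v : V) : linkChain v (0 : Finset V → A) = 0 := by
  funext S
  simp [linkChain]

lemma linkChain_of_avoidsVertex {v : V} {c : Finset V → A} (hc : AvoidsVertex v c) :
    linkChain v c = 0 := by
  funext S
  by_cases hvS : v ∈ S <;> simp [linkChain, hvS, hc _ (Finset.mem_insert_self v S)]

lemma linkChain_coneChain {v : V} {x : Finset V → A} (hx : AvoidsVertex v x) :
    linkChain v (coneChain v x) = x := by
  funext S
  by_cases hvS : v ∈ S
  · simp [linkChain, hvS, hx S hvS]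
  · simp [linkChain, coneChain, hvS, signOf_smul_signOf_smul]

lemma Subchain.deletionChain {a c : Finset V → A} (h : Subchain a c) (v : V) :
    Subchain (deletionChain v a) (deletionChain v c) := by
  intro T
  by_cases hvT : v ∈ T
  · simp [Paper2CM.deletionChain, hvT]
  · simpa [Paper2CM.deletionChain, hvT] using h T

lemma Subchain.linkChain {a c : Finset V → A} (h : Subchain a c) (v : V) :
    Subchain (linkChain v a) (linkChain v c) := by
  intro S
  by_cases hvS : v ∈ S
  · simp [Paper2CM.linkChain, hvS]
  · rcases h (insert v S) with h | h <;> simp [Paper2CM.linkChain, hvS, h]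

variable [Fintype V]

lemma bdry_add (a b : Finset V → A) : bdry (a + b) = bdry a + bdry b := by
  funext S
  simp [bdry, smul_add, Finset.sum_add_distrib]

lemma bdry_neg (a : Finset V → A) : bdry (-a) = -bdry a := by
  funext S
  simp [bdry]

lemma bdry_sub (a b : Finset V → A) : bdry (a - b) = bdry a - bdry b := by
  rw [sub_eq_add_neg, bdry_add, bdry_neg, ← sub_eq_add_neg]

lemma AvoidsVertex.bdry {v : V} {c : Finset V → A} (hc : AvoidsVertex v c) :
    AvoidsVertex v (bdry c) := fun S hvS =>
  Finset.sum_eq_zero fun t _ => by rw [hc _ (Finset.mem_insert_of_mem hvS), smul_zero]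

lemma bdry_coneChain_apply_of_notMem {v : V} {S : Finset V} (x : Finset V → A)
    (hvS : v ∉ S) : bdry (coneChain v x) S = x S := by
  rw [bdry, Finset.sum_eq_single_of_mem v (Finset.mem_compl.mpr hvS)]
  · simp [coneChain, hvS, signOf_insert_self, signOf_smul_signOf_smul]
  · intro t _ htv
    have : v ∉ insert t S := by simp [Ne.symm htv, hvS]
    simp [coneChain, this]

lemma bdry_coneChain_apply_insert {v : V} {R : Finset V} {x : Finset V → A}
    (hxv : AvoidsVertex v x) (hvR : v ∉ R) :
    bdry (coneChain v x) (insert v R) = -(signOf v R • bdry x R) := by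
  have hRc : Rᶜ = insert v (insert v R)ᶜ := by
    rw [Finset.compl_insert, Finset.insert_erase (Finset.mem_compl.mpr hvR)]
  rw [bdry, bdry, hRc, Finset.sum_insert (by simp),
    hxv _ (Finset.mem_insert_self v R), smul_zero, zero_add, Finset.smul_sum,
    ← Finset.sum_neg_distrib]
  refine Finset.sum_congr rfl fun t ht => ?_
  have htR : t ∉ R := fun h => Finset.mem_compl.mp ht (Finset.mem_insert_of_mem h)
  have htv : t ≠ v := fun h => Finset.mem_compl.mp ht (h ▸ Finset.mem_insert_self v R)
  have herase : (insert t (insert v R)).erase v = insert t R := by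
    rw [Finset.erase_insert_of_ne htv, Finset.erase_insert hvR]
  rw [coneChain, if_pos (Finset.mem_insert_of_mem (Finset.mem_insert_self v R)), herase,
    smul_smul, signOf_insert_self, signOf_insert_mul_signOf_insert htv htR hvR,
    signOf_insert_self, smul_smul, neg_smul, mul_comm]

lemma bdry_coneChain {v : V} {x : Finset V → A} (hxv : AvoidsVertex v x) :
    bdry (coneChain v x) = x - coneChain v (bdry x) := by
  funext S
  by_cases hvS : v ∈ S
  · have hR : v ∉ S.erase v := Finset.notMem_erase v S
    rw [← Finset.insert_erase hvS, bdry_coneChain_apply_insert hxv hR, Pi.sub_apply,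
      hxv _ (Finset.mem_insert_self v _), coneChain, if_pos (Finset.mem_insert_self v _),
      Finset.erase_insert hR, zero_sub]
  · simp [bdry_coneChain_apply_of_notMem x hvS, coneChain, hvS]

lemma bdry_linkChain (v : V) (c : Finset V → A) :
    bdry (linkChain v c) = -linkChain v (bdry c) := by
  have hl := linkChain_avoidsVertex v c
  conv_rhs => rw [← deletionChain_add_coneChain_linkChain v c]
  rw [bdry_add, bdry_coneChain hl, linkChain_add, linkChain_sub,
    linkChain_of_avoidsVertex (deletionChain_avoidsVertex v c).bdry,
    linkChain_of_avoidsVertex hl, linkChain_coneChain hl.bdry]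
  simp

lemma bdry_deletionChain (v : V) (c : Finset V → A) :
    bdry (deletionChain v c) = bdry c - linkChain v c + coneChain v (bdry (linkChain v c)) := by
  have h := congrArg bdry (deletionChain_add_coneChain_linkChain v c)
  rw [bdry_add, bdry_coneChain (linkChain_avoidsVertex v c)] at h
  rw [← h]
  abel

end Chains

theorem cone_of_minimal_cycle_is_minimal_general
    {V : Type*} [Fintype V] [LinearOrder V] (k : Type*) [Field k]
    (d : ℕ) (s c : Finset V → k)
    (hs : IsMinimalCycle d s)
    (hc : IsSimpChain (d + 1) c)
    (hbc : bdry c = s)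
    (hmin : ∀ c', Subchain c' c → bdry c' = s → c' = c)
    (v : V) (hv : ∀ T, c T ≠ 0 → v ∉ T) :
    IsMinimalCycle (d + 1) (c - coneChain v s) := by
  obtain ⟨hs0, hsd, hs_cyc, hs_min⟩ := hs
  have hcv : AvoidsVertex v c := fun T hvT => not_not.mp fun h => hv T h hvT
  have hsv : AvoidsVertex v s := hbc ▸ hcv.bdry
  have hdel : deletionChain v (c - coneChain v s) = c := by
    rw [deletionChain_sub, deletionChain_of_avoidsVertex hcv, deletionChain_coneChain,
      sub_zero]
  have hlink : linkChain v (c - coneChain v s) = -s := by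
    rw [linkChain_sub, linkChain_of_avoidsVertex hcv, linkChain_coneChain hsv, zero_sub]
  refine ⟨fun h => hs0 ?_, hc.sub (hsd.coneChain v), ?_, fun c' hsub hcyc => ?_⟩
  · rw [← neg_eq_zero, ← hlink, h, linkChain_zero]
  · rw [bdry_sub, hbc, bdry_coneChain hsv, hs_cyc, coneChain_zero, sub_zero, sub_self]
  set a := deletionChain v c'
  set l := linkChain v c'
  have hc' : c' = a + coneChain v l := (deletionChain_add_coneChain_linkChain v c').symm
  have hl : bdry l = 0 := by rw [bdry_linkChain, hcyc, linkChain_zero, neg_zero]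
  have ha : bdry a = -l := by
    rw [bdry_deletionChain, hcyc, hl, coneChain_zero, zero_sub, add_zero]
  have ha_sub : Subchain a c := hdel ▸ hsub.deletionChain v
  have hl_sub : Subchain (-l) s := by simpa only [hlink, neg_neg] using (hsub.linkChain v).neg
  rcases hs_min (-l) hl_sub (by rw [bdry_neg, hl, neg_zero]) with h | h
  · have hl0 : l = 0 := neg_eq_zero.mp h
    have hca : c - a = c :=
      hmin _ ha_sub.complement (by rw [bdry_sub, ha, hl0, neg_zero, sub_zero, hbc])
    left
    rw [hc', sub_eq_self.mp hca, hl0, coneChain_zero, add_zero]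
  · right
    rw [hc', hmin a ha_sub (by rw [ha, h]), ← neg_neg l, h, coneChain_neg, sub_eq_add_neg]

/-- **cone lemma.** Let `s` be a minimal `(d−1)`-cycle (supported on
cardinality-`d` sets) and let `c` be a `d`-chain with `∂c = s` having no proper
subchain with boundary `s`.  If `v` is a vertex lying in no set of `supp(c)`, then
`s̃ = c − v*s` is a minimal `d`-cycle. -/
theorem cone_of_minimal_cycle_is_minimal
    {V : Type*} [Fintype V] [LinearOrder V] (k : Type*) [Field k]
    (d : ℕ) (hd : 1 ≤ d) (s c : Finset V → k)
    (hs : IsMinimalCycle d s)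
    (hc : IsSimpChain (d + 1) c)
    (hbc : bdry c = s)
    (hmin : ∀ c', Subchain c' c → bdry c' = s → c' = c)
    (v : V) (hv : ∀ T, c T ≠ 0 → v ∉ T) :
    IsMinimalCycle (d + 1) (c - coneChain v s) :=
  cone_of_minimal_cycle_is_minimal_general k d s c hs hc hbc hmin v hv

end Paper2CM
end

section
/- Let k be a field and let K be a finite simplicial complex of dimension ≥ 1 that is doubly Cohen–Macaulay over k. Then for every vertex v of K, the link lk_K(v) = {S ∈ K : v ∉ S, S ∪ {v} ∈ K} is doubly Cohen–Macaulay over k, of dimension dim K − 1. -/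
/-!
Links of links are links, so every link of a CM complex is CM. For a vertex `w ≠ v` of
`lk_K(v)`, deleting `w` commutes with taking the link of `v`: `lk_K(v) − w = lk_{K−w}(v)`,
which is CM since `K − w` is. Its dimension is right because `K − w` is pure of dimension
`dim K`, so the star of `v` in `K − w` contains a face of cardinality `dim K + 1`.
-/

namespace Paper2CM

variable {V : Type*} [Fintype V] [LinearOrder V]

/-- A (finite) simplicial complex on vertex type `V`: a collection of finite subsets
closed under taking subsets, containing the empty set. -/
def IsComplex (K : Set (Finset V)) : Prop :=
  ∅ ∈ K ∧ ∀ S ∈ K, ∀ T, T ⊆ S → T ∈ K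

/-- The link of a face: `lk_L(T) = {S ∈ L : S ∩ T = ∅, S ∪ T ∈ L}`. -/
def cxLink (L : Set (Finset V)) (T : Finset V) : Set (Finset V) :=
  {S | S ∈ L ∧ Disjoint S T ∧ S ∪ T ∈ L}

/-- A pure complex: every face is contained in a face of maximal cardinality. -/
def IsPure (L : Set (Finset V)) : Prop :=
  ∀ S ∈ L, ∃ F ∈ L, S ⊆ F ∧ ∀ G ∈ L, G.card ≤ F.card

/-- A chain of the complex `L` supported on faces of `L` of cardinality `n`. -/
def IsChainOn (k : Type*) [Field k] (L : Set (Finset V)) (n : ℕ) (c : Finset V → k) : Prop :=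
  ∀ T, c T ≠ 0 → T ∈ L ∧ T.card = n

/-- Vanishing of the reduced homology `H̃_{n-1}(L; k)`: every cycle supported on
cardinality-`n` faces of `L` is the boundary of a chain on cardinality-`(n+1)` faces of `L`. -/
def HomologyVanishes (k : Type*) [Field k] (L : Set (Finset V)) (n : ℕ) : Prop :=
  ∀ c : Finset V → k, IsChainOn k L n c → bdry c = 0 →
    ∃ b : Finset V → k, IsChainOn k L (n + 1) b ∧ bdry b = c

/-- Cohen–Macaulay over `k` via Reisner's criterion: `L` is pure and for every face
`T ∈ L` and every `i < dim lk_L(T)`, `H̃_i(lk_L(T); k) = 0` (here `i = n - 1`, and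
`i < dim lk_L(T)` is expressed as: the link has a face of cardinality `> n`). -/
def IsCM (k : Type*) [Field k] (L : Set (Finset V)) : Prop :=
  IsPure L ∧ ∀ T ∈ L, ∀ n : ℕ, (∃ F ∈ cxLink L T, n < F.card) →
    HomologyVanishes k (cxLink L T) n

/-- Doubly Cohen–Macaulay over `k`: `K` is CM and for every vertex `v` of `K`,
`K − v` is CM of the same dimension as `K` (same maximal cardinality of a face). -/
def Is2CM (k : Type*) [Field k] (K : Set (Finset V)) : Prop :=
  IsCM k K ∧ ∀ v : V, ({v} : Finset V) ∈ K →
    IsCM k {S | S ∈ K ∧ v ∉ S} ∧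
    ∀ S ∈ K, ∃ F ∈ K, v ∉ F ∧ S.card ≤ F.card

end Paper2CM

namespace Paper2CM

variable {V : Type*} {L : Set (Finset V)}

theorem IsComplex.deleteVertex (hL : IsComplex L) (w : V) :
    IsComplex {S | S ∈ L ∧ w ∉ S} :=
  ⟨⟨hL.1, Finset.notMem_empty w⟩, fun _ hS T hTS => ⟨hL.2 _ hS.1 T hTS, fun h => hS.2 (hTS h)⟩⟩

variable [LinearOrder V]

theorem sdiff_mem_cxLink (hL : IsComplex L) {F T : Finset V} (hF : F ∈ L) (hTF : T ⊆ F) :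
    F \ T ∈ cxLink L T :=
  ⟨hL.2 F hF _ Finset.sdiff_subset, Finset.sdiff_disjoint,
    by rwa [Finset.sdiff_union_of_subset hTF]⟩

theorem card_add_card_le_of_mem_cxLink {T S : Finset V} {m : ℕ}
    (hm : ∀ G ∈ L, G.card ≤ m) (hS : S ∈ cxLink L T) : S.card + T.card ≤ m := by
  rw [← Finset.card_union_of_disjoint hS.2.1]
  exact hm _ hS.2.2

theorem cxLink_cxLink (hL : IsComplex L) {T S : Finset V} (hST : Disjoint S T) :
    cxLink (cxLink L T) S = cxLink L (S ∪ T) := by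
  ext X
  simp only [cxLink, Set.mem_ofPred_eq, Finset.disjoint_union_right]
  constructor
  · rintro ⟨⟨hX, hXT, -⟩, hXS, -, -, hXST⟩
    exact ⟨hX, ⟨hXS, hXT⟩, by rwa [← Finset.union_assoc]⟩
  · rintro ⟨hX, ⟨hXS, hXT⟩, hU⟩
    rw [← Finset.union_assoc] at hU
    have hXT_mem : X ∪ T ∈ L :=
      hL.2 _ hU _ (Finset.union_subset_union_left Finset.subset_union_left)
    exact ⟨⟨hX, hXT, hXT_mem⟩, hXS, hL.2 _ hU _ Finset.subset_union_left,
      Finset.disjoint_union_left.mpr ⟨hXT, hST⟩, hU⟩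

theorem cxLink_deleteVertex {T : Finset V} {w : V} (hwT : w ∉ T) :
    {S | S ∈ cxLink L T ∧ w ∉ S} = cxLink {S | S ∈ L ∧ w ∉ S} T := by
  ext S
  simp only [cxLink, Set.mem_ofPred_eq, Finset.mem_union]
  constructor
  · rintro ⟨⟨hS, hST, hSTL⟩, hwS⟩
    exact ⟨⟨hS, hwS⟩, hST, hSTL, by rintro (h | h); exacts [hwS h, hwT h]⟩
  · rintro ⟨⟨hS, hwS⟩, hST, hSTL, -⟩
    exact ⟨⟨hS, hST, hSTL⟩, hwS⟩

theorem IsPure.exists_mem_cxLink_le_card_add (hL : IsComplex L) (hp : IsPure L)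
    {T : Finset V} (hT : T ∈ L) {m : ℕ} (hm : ∃ G ∈ L, m ≤ G.card) :
    ∃ S ∈ cxLink L T, m ≤ S.card + T.card := by
  obtain ⟨F, hF, hTF, hFmax⟩ := hp T hT
  obtain ⟨G, hG, hmG⟩ := hm
  refine ⟨F \ T, sdiff_mem_cxLink hL hF hTF, ?_⟩
  rw [Finset.card_sdiff_add_card_eq_card hTF]
  exact hmG.trans (hFmax G hG)

theorem IsPure.cxLink (hL : IsComplex L) (hp : IsPure L) (T : Finset V) :
    IsPure (cxLink L T) := by
  intro S hS
  obtain ⟨F, hF, hsub, hFmax⟩ := hp (S ∪ T) hS.2.2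
  have hTF : T ⊆ F := Finset.union_subset_iff.mp hsub |>.2
  refine ⟨F \ T, sdiff_mem_cxLink hL hF hTF,
    Finset.subset_sdiff.mpr ⟨Finset.union_subset_iff.mp hsub |>.1, hS.2.1⟩, fun G hG => ?_⟩
  have hGT := card_add_card_le_of_mem_cxLink hFmax hG
  rw [← Finset.card_sdiff_add_card_eq_card hTF] at hGT
  omega

theorem IsCM.cxLink [Fintype V] {k : Type*} [Field k] (hL : IsComplex L) (hcm : IsCM k L)
    (T : Finset V) : IsCM k (cxLink L T) := by
  refine ⟨hcm.1.cxLink hL T, fun T' hT' n hn => ?_⟩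
  rw [cxLink_cxLink hL hT'.2.1] at hn ⊢
  exact hcm.2 (T' ∪ T) hT'.2.2 n hn

theorem link_of_2CM_is_2CM_general
    {V : Type*} [Fintype V] [LinearOrder V] (k : Type*) [Field k]
    (d : ℕ) (K : Set (Finset V))
    (hK : IsComplex K)
    (hdim : (∀ S ∈ K, S.card ≤ d + 1) ∧ ∃ S ∈ K, S.card = d + 1)
    (h2cm : Is2CM k K)
    (v : V) (hv : ({v} : Finset V) ∈ K) :
    Is2CM k (cxLink K {v}) ∧
    (∀ S ∈ cxLink K {v}, S.card ≤ d) ∧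
    ∃ S ∈ cxLink K {v}, S.card = d := by
  obtain ⟨hKcm, hKdel⟩ := h2cm
  obtain ⟨hKmax, S₀, hS₀K, hS₀⟩ := hdim
  have hlink_le : ∀ S ∈ cxLink K {v}, S.card ≤ d := fun S hS => by
    have := card_add_card_le_of_mem_cxLink hKmax hS
    rw [Finset.card_singleton] at this
    omega
  refine ⟨⟨hKcm.cxLink hK {v}, fun w hw => ?_⟩, hlink_le, ?_⟩
  · have hwv : w ∉ ({v} : Finset V) := Finset.disjoint_singleton_left.mp hw.2.1
    obtain ⟨hKwcm, hKwbig⟩ := hKdel w hw.1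
    rw [cxLink_deleteVertex hwv]
    refine ⟨hKwcm.cxLink (hK.deleteVertex w) {v}, fun S hS => ?_⟩
    obtain ⟨F, hFK, hwF, hF⟩ := hKwbig S₀ hS₀K
    obtain ⟨S', hS', hS'card⟩ := hKwcm.1.exists_mem_cxLink_le_card_add (hK.deleteVertex w)
      ⟨hv, hwv⟩ ⟨F, ⟨hFK, hwF⟩, hS₀ ▸ hF⟩
    rw [← cxLink_deleteVertex hwv] at hS'
    refine ⟨S', hS'.1, hS'.2, ?_⟩
    rw [Finset.card_singleton] at hS'card
    linarith [hlink_le S hS]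
  · obtain ⟨S, hS, hScard⟩ :=
      hKcm.1.exists_mem_cxLink_le_card_add hK hv ⟨S₀, hS₀K, hS₀.ge⟩
    rw [Finset.card_singleton] at hScard
    exact ⟨S, hS, le_antisymm (hlink_le S hS) (by omega)⟩

/-- If `K` is doubly Cohen–Macaulay over `k` of dimension
`d ≥ 1` (faces have cardinality `≤ d + 1`, with a face of cardinality `d + 1`),
then for every vertex `v` of `K` the link `lk_K(v)` is doubly Cohen–Macaulay over
`k` of dimension `d − 1` (faces have cardinality `≤ d`, with one of cardinality `d`). -/
theorem link_of_2CM_is_2CM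
    {V : Type*} [Fintype V] [LinearOrder V] (k : Type*) [Field k]
    (d : ℕ) (hd : 1 ≤ d) (K : Set (Finset V))
    (hK : IsComplex K)
    (hdim : (∀ S ∈ K, S.card ≤ d + 1) ∧ ∃ S ∈ K, S.card = d + 1)
    (h2cm : Is2CM k K)
    (v : V) (hv : ({v} : Finset V) ∈ K) :
    Is2CM k (cxLink K {v}) ∧
    (∀ S ∈ cxLink K {v}, S.card ≤ d) ∧
    ∃ S ∈ cxLink K {v}, S.card = d :=
  link_of_2CM_is_2CM_general k d K hK hdim h2cm v hv

end Paper2CM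
end
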